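/- arXiv:1705.02398 — 7 statements merged into one kernel-verified Lean document; each statement's English description precedes it below -/
import Mathlib

section
/- Let γ > 0 and φ̃ > 0. Then there exists exactly one P > 0 satisfying log(1+P·γ) = 1 + (φ̃·γ − 1)/(1+P·γ). (Logarithms are natural.) -/
/-!
Substituting `x = 1 + Pγ`, the equation becomes `x (log x - 1) = φγ - 1` with `x > 1`.
The left side is continuous, strictly increasing on `[1, ∞)` (its derivative is `log x`),
equals `-1` at `x = 1` and tends to `∞`, while the right side exceeds `-1`.
-/

open Real Set Filter

namespace Real

theorem continuous_mul_log_sub_one : Continuous fun x : ℝ ↦ x * (log x - 1) :=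
  (continuous_mul_log.fun_sub continuous_id').congr fun x ↦ by ring

theorem hasDerivAt_mul_log_sub_one {x : ℝ} (hx : x ≠ 0) :
    HasDerivAt (fun x : ℝ ↦ x * (log x - 1)) (log x) x := by
  refine ((hasDerivAt_id' x).fun_mul ((hasDerivAt_log hx).sub_const 1)).congr_deriv ?_
  rw [one_mul, mul_inv_cancel₀ hx]
  ring

theorem mul_log_sub_one_strictMonoOn : StrictMonoOn (fun x : ℝ ↦ x * (log x - 1)) (Ici 1) := by
  refine strictMonoOn_of_deriv_pos (convex_Ici 1) continuous_mul_log_sub_one.continuousOn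
    fun x hx ↦ ?_
  rw [interior_Ici] at hx
  have hx1 : 1 < x := hx
  rw [(hasDerivAt_mul_log_sub_one (zero_lt_one.trans hx1).ne').deriv]
  exact log_pos hx1

theorem tendsto_mul_log_sub_one_atTop : Tendsto (fun x : ℝ ↦ x * (log x - 1)) atTop atTop :=
  tendsto_id.atTop_mul_atTop₀ (tendsto_atTop_add_const_right _ (-1) tendsto_log_atTop)

theorem existsUnique_one_lt_mul_log_sub_one_eq {y : ℝ} (hy : -1 < y) :
    ∃! x : ℝ, 1 < x ∧ x * (log x - 1) = y := by
  obtain ⟨x, hx_ge, hx⟩ := intermediate_value_Ici continuous_mul_log_sub_one.continuousOn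
    tendsto_mul_log_sub_one_atTop (show y ∈ Ici (1 * (log 1 - 1)) by simpa using hy.le)
  have hx_gt : 1 < x := by
    refine (mem_Ici.mp hx_ge).lt_of_ne fun h ↦ hy.ne ?_
    rw [← hx, ← h]
    norm_num
  refine ⟨x, ⟨hx_gt, hx⟩, fun x' ⟨hx'_gt, hx'⟩ ↦ ?_⟩
  exact mul_log_sub_one_strictMonoOn.injOn hx'_gt.le hx_gt.le (hx'.trans hx.symm)

theorem log_eq_one_add_div_iff {x c : ℝ} (hx : x ≠ 0) :
    log x = 1 + c / x ↔ x * (log x - 1) = c := by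
  constructor <;> intro h
  · rw [h]; field_simp; ring
  · rw [← h]; field_simp; ring

end Real

theorem existsUnique_pos_one_add_mul_of_existsUnique_one_lt {γ : ℝ} (hγ : 0 < γ)
    {Q : ℝ → Prop} (h : ∃! x : ℝ, 1 < x ∧ Q x) : ∃! P : ℝ, 0 < P ∧ Q (1 + P * γ) := by
  obtain ⟨x, ⟨hx1, hQx⟩, huniq⟩ := h
  refine ⟨(x - 1) / γ, ⟨div_pos (by linarith) hγ, ?_⟩, fun P ⟨hP, hQP⟩ ↦ ?_⟩
  · rwa [div_mul_cancel₀ _ hγ.ne', add_sub_cancel]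
  · rw [eq_div_iff hγ.ne', ← huniq _ ⟨by nlinarith, hQP⟩]
    ring

theorem lambert_power_exists_unique
    (γ φ : ℝ) (hγ : 0 < γ) (hφ : 0 < φ) :
    ∃! P : ℝ, 0 < P ∧
      Real.log (1 + P * γ) = 1 + (φ * γ - 1) / (1 + P * γ) := by
  refine existsUnique_pos_one_add_mul_of_existsUnique_one_lt
    (Q := fun x ↦ log x = 1 + (φ * γ - 1) / x) hγ ?_
  have hy : -1 < φ * γ - 1 := by linarith [mul_pos hφ hγ]
  refine (existsUnique_congr fun x ↦ ?_).mp (existsUnique_one_lt_mul_log_sub_one_eq hy)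
  exact and_congr_right fun hx ↦ (log_eq_one_add_div_iff (zero_lt_one.trans hx).ne').symm
end

section
/- Let X > 0, T_s > 0, L > 0, γ > 0 and Ψ > 0, and set φ̃ = Ψ·T_s/X. Let P* be the unique P > 0 satisfying log(1+P·γ) = 1 + (φ̃·γ − 1)/(1+P·γ). Then P* is a global minimizer of the cost c(P) = (X·P/T_s + Ψ)·L/log(1+P·γ) over P ∈ (0, ∞), i.e., c(P*) ≤ c(P) for every P > 0. -/
theorem lambert_power_minimizes_cost
    (X Ts L γ Ψ φ Pstar : ℝ)
    (hX : 0 < X) (hTs : 0 < Ts) (hL : 0 < L) (hγ : 0 < γ) (hΨ : 0 < Ψ)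
    (hφ : φ = Ψ * Ts / X)
    (hPstar_pos : 0 < Pstar)
    (hPstar_eq : Real.log (1 + Pstar * γ) = 1 + (φ * γ - 1) / (1 + Pstar * γ))
    (hPstar_unique : ∀ P : ℝ, 0 < P →
      Real.log (1 + P * γ) = 1 + (φ * γ - 1) / (1 + P * γ) → P = Pstar) :
    ∀ P : ℝ, 0 < P →
      (X * Pstar / Ts + Ψ) * L / Real.log (1 + Pstar * γ) ≤
        (X * P / Ts + Ψ) * L / Real.log (1 + P * γ) := by
  intro P hP
  set a := 1 + Pstar * γ with ha_def
  set b := 1 + P * γ with hb_def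
  have ha1 : 1 < a := by nlinarith
  have hb1 : 1 < b := by nlinarith
  have ha0 : (0:ℝ) < a := by linarith
  have hb0 : (0:ℝ) < b := by linarith
  have hla : 0 < Real.log a := Real.log_pos ha1
  have hlb : 0 < Real.log b := Real.log_pos hb1
  have hφ0 : 0 < φ := by rw [hφ]; positivity
  -- stationarity in product form
  have hstat : a * Real.log a = a - 1 + φ * γ := by
    have h := hPstar_eq
    field_simp at h
    nlinarith [h]
  -- log(b/a) ≤ b/a - 1
  have hlog : Real.log (b / a) ≤ b / a - 1 :=
    Real.log_le_sub_one_of_pos (by positivity)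
  rw [Real.log_div (ne_of_gt hb0) (ne_of_gt ha0)] at hlog
  have key : a * Real.log b ≤ (P + φ) * γ := by
    have h2 : a * (Real.log b - Real.log a) ≤ a * (b / a - 1) :=
      mul_le_mul_of_nonneg_left hlog ha0.le
    have h3 : a * (b / a - 1) = b - a := by field_simp
    nlinarith [h2]
  have hPs : (Pstar + φ) * γ = a * Real.log a := by
    rw [hstat, ha_def]; ring
  have h1 : (Pstar + φ) * Real.log b ≤ (P + φ) * Real.log a := by
    have h4 : a * Real.log b * Real.log a ≤ (P + φ) * γ * Real.log a :=
      mul_le_mul_of_nonneg_right key hla.le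
    nlinarith [h4, hPs]
  have hΨeq : Ψ = X * φ / Ts := by
    rw [hφ]; field_simp
  rw [div_le_div_iff₀ hla hlb, hΨeq]
  have hconst : 0 ≤ X * L / Ts := by positivity
  have h5 := mul_le_mul_of_nonneg_left h1 hconst
  have e1 : (X * Pstar / Ts + X * φ / Ts) * L * Real.log b
      = X * L / Ts * ((Pstar + φ) * Real.log b) := by ring
  have e2 : (X * P / Ts + X * φ / Ts) * L * Real.log a
      = X * L / Ts * ((P + φ) * Real.log a) := by ring
  linarith [h5]
end

section
/- Let L > 0, T_s > 0 and m ≥ 1 a natural number. For any μ : Fin m → ℝ with μ_i > 0 for all i and ∑_i μ_i = T_s, one has ∑_i μ_i·(e^{L/μ_i} − 1) ≥ T_s·(e^{m·L/T_s} − 1), with equality if and only if μ_i = T_s/m for all i. -/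
open Real Finset

/-!
For `x > 0` the energy `x e^{L/x}` lies above its tangent line at `c = T_s / m`: with
`t = L/x - L/c` one has `x e^{L/x} = e^{L/c} x e^t ≥ e^{L/c} x (1 + t)`, strictly unless `x = c`.
The tangent is affine, and under `∑ μ_i = T_s` its values at the `μ_i` sum to
`T_s e^{m L / T_s}`.
-/

lemma mul_exp_eq_exp_mul_mul_exp_sub (x a b : ℝ) :
    x * exp a = exp b * (x * exp (a - b)) := by
  rw [mul_left_comm, ← exp_add, add_sub_cancel]

lemma add_sub_div_mul_eq_mul_div_sub_div_add_one {L c x : ℝ} (hx : x ≠ 0) :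
    x + L - L / c * x = x * (L / x - L / c + 1) := by
  field_simp
  ring

lemma exp_div_tangent_le_mul_exp_div {L c x : ℝ} (hx : 0 < x) :
    exp (L / c) * (x + L - L / c * x) ≤ x * exp (L / x) := by
  rw [mul_exp_eq_exp_mul_mul_exp_sub x _ (L / c),
    add_sub_div_mul_eq_mul_div_sub_div_add_one hx.ne']
  gcongr
  exact add_one_le_exp _

lemma exp_div_tangent_eq_mul_exp_div_iff {L c x : ℝ} (hL : L ≠ 0) (hx : 0 < x) :
    exp (L / c) * (x + L - L / c * x) = x * exp (L / x) ↔ x = c := by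
  rw [mul_exp_eq_exp_mul_mul_exp_sub x _ (L / c),
    add_sub_div_mul_eq_mul_div_sub_div_add_one hx.ne', mul_right_inj' (exp_pos _).ne',
    mul_right_inj' hx.ne']
  constructor
  · intro h
    by_contra hxc
    have ht : L / x - L / c ≠ 0 := by
      rwa [sub_ne_zero, Ne, div_eq_mul_inv, div_eq_mul_inv, mul_right_inj' hL, inv_inj]
    exact (add_one_lt_exp ht).ne h
  · rintro rfl
    simp

theorem equal_time_splitting_minimizes_energy_general
    (L Ts : ℝ) (hL : 0 < L) (hTs : 0 < Ts) (m : ℕ)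
    (μ : Fin m → ℝ) (hμ : ∀ i, 0 < μ i) (hsum : ∑ i, μ i = Ts) :
    (Ts * (Real.exp (m * L / Ts) - 1) ≤
        ∑ i, μ i * (Real.exp (L / μ i) - 1)) ∧
      ((∑ i, μ i * (Real.exp (L / μ i) - 1) =
          Ts * (Real.exp (m * L / Ts) - 1)) ↔ ∀ i, μ i = Ts / m) := by
  set c := Ts / m
  set tangent := fun x => exp (L / c) * (x + L - L / c * x) - x
  have htangent_sum : ∑ i, tangent (μ i) = Ts * (exp (m * L / Ts) - 1) := by
    have hLc : L / c = m * L / Ts := by rw [div_div_eq_mul_div, mul_comm]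
    simp only [tangent, sum_sub_distrib, ← mul_sum, sum_add_distrib, hsum, sum_const,
      card_univ, Fintype.card_fin, nsmul_eq_mul, hLc]
    field_simp
    ring
  have htangent_le : ∀ i ∈ univ, tangent (μ i) ≤ μ i * (exp (L / μ i) - 1) := fun i _ => by
    linarith [exp_div_tangent_le_mul_exp_div (L := L) (c := c) (hμ i)]
  refine ⟨htangent_sum ▸ sum_le_sum htangent_le, ?_⟩
  rw [← htangent_sum, eq_comm, sum_eq_sum_iff_of_le htangent_le]
  refine forall_congr' fun i => ?_
  rw [← exp_div_tangent_eq_mul_exp_div_iff hL.ne' (hμ i)]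
  simp only [mem_univ, true_implies, tangent]
  constructor <;> intro h <;> linarith

theorem equal_time_splitting_minimizes_energy
    (L Ts : ℝ) (hL : 0 < L) (hTs : 0 < Ts) (m : ℕ) (hm : 1 ≤ m)
    (μ : Fin m → ℝ) (hμ : ∀ i, 0 < μ i) (hsum : ∑ i, μ i = Ts) :
    (Ts * (Real.exp (m * L / Ts) - 1) ≤
        ∑ i, μ i * (Real.exp (L / μ i) - 1)) ∧
      ((∑ i, μ i * (Real.exp (L / μ i) - 1) =
          Ts * (Real.exp (m * L / Ts) - 1)) ↔ ∀ i, μ i = Ts / m) :=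
  equal_time_splitting_minimizes_energy_general L Ts hL hTs m μ hμ hsum
end

section
/- Let n ≥ 1, let Y : Fin n → ℝ be injective, and let g : ℕ → ℝ. Define F(S) = (∑_{i ∈ S} Y_i) + g(|S|) for finite sets S ⊆ Fin n. If S* maximizes F over all subsets of Fin n, then for every i ∈ S* and every j ∉ S*, Y_j < Y_i. -/
theorem optimal_set_is_candidate
    (n : ℕ) (hn : 1 ≤ n) (Y : Fin n → ℝ) (hY : Function.Injective Y)
    (g : ℕ → ℝ) (Sstar : Finset (Fin n))
    (hopt : ∀ S : Finset (Fin n),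
      (∑ i ∈ S, Y i) + g S.card ≤ (∑ i ∈ Sstar, Y i) + g Sstar.card) :
    ∀ i ∈ Sstar, ∀ j ∉ Sstar, Y j < Y i := by
  intro i hi j hj
  have hij : i ≠ j := fun h => hj (h ▸ hi)
  have hjne : j ∉ Sstar.erase i := fun h => hj (Finset.mem_of_mem_erase h)
  have hcard : (insert j (Sstar.erase i)).card = Sstar.card := by
    rw [Finset.card_insert_of_notMem hjne, Finset.card_erase_of_mem hi]
    exact Nat.succ_pred_eq_of_pos (Finset.card_pos.mpr ⟨i, hi⟩)
  have hsum : (∑ k ∈ insert j (Sstar.erase i), Y k)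
      = Y j + ((∑ k ∈ Sstar, Y k) - Y i) := by
    rw [Finset.sum_insert hjne, Finset.sum_erase_eq_sub hi]
  have h := hopt (insert j (Sstar.erase i))
  rw [hcard, hsum] at h
  have hle : Y j ≤ Y i := by linarith
  have hne : Y j ≠ Y i := fun h => hij (hY h.symm)
  exact lt_of_le_of_ne hle hne
end

section
/- Fix φ̃ > 0. For γ > 0 let P(γ) denote the unique P > 0 satisfying log(1+P·γ) = 1 + (φ̃·γ − 1)/(1+P·γ). Then P is strictly decreasing: if 0 < γ₁ < γ₂ then P(γ₁) > P(γ₂). -/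
/-!
Put `x = 1 + P γ`. Multiplying the stationarity equation by `x` turns it into
`klFun x = x log x + 1 - x = φ̃ γ`, so `φ̃ / P = klFun x / (x - 1)` is the slope of the strictly
convex function `klFun` between its zero `1` and `x`. If `P` did not decrease, `x` would grow with
`γ`, hence so would this slope, forcing `P` to decrease after all.
-/

open Real Set InformationTheory

lemma strictMonoOn_klFun_div_sub_one : StrictMonoOn (fun x ↦ klFun x / (x - 1)) (Ioi 1) := by
  intro x hx y hy hxy
  have h := strictConvexOn_klFun.secant_strict_mono (a := 1) (by simp)
    (mem_Ici.2 (zero_lt_one.trans hx).le) (mem_Ici.2 (zero_lt_one.trans hy).le) hx.ne' hy.ne' hxy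
  simpa only [klFun_one, sub_zero] using h

lemma klFun_eq_of_log_eq {x c : ℝ} (hx : 0 < x) (h : log x = 1 + (c - 1) / x) : klFun x = c := by
  rw [klFun_apply, h]
  field_simp
  ring

lemma div_eq_klFun_div_sub_one {φ P γ : ℝ} (hγ : 0 < γ)
    (h : klFun (1 + P * γ) = φ * γ) : φ / P = klFun (1 + P * γ) / (1 + P * γ - 1) := by
  rw [h, add_sub_cancel_left, mul_div_mul_right _ _ hγ.ne']

theorem lambert_power_decreasing_in_gain_general
    (φ : ℝ) (hφ : 0 < φ) (P : ℝ → ℝ)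
    (hP_pos : ∀ γ : ℝ, 0 < γ → 0 < P γ)
    (hP_eq : ∀ γ : ℝ, 0 < γ →
      Real.log (1 + P γ * γ) = 1 + (φ * γ - 1) / (1 + P γ * γ)) :
    ∀ γ₁ γ₂ : ℝ, 0 < γ₁ → γ₁ < γ₂ → P γ₂ < P γ₁ := by
  intro γ₁ γ₂ hγ₁ h12
  have hγ₂ : 0 < γ₂ := hγ₁.trans h12
  have hx : ∀ γ, 0 < γ → 1 < 1 + P γ * γ := fun γ hγ ↦
    lt_add_of_pos_right 1 (mul_pos (hP_pos γ hγ) hγ)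
  have hslope : ∀ γ, 0 < γ → φ / P γ = klFun (1 + P γ * γ) / (1 + P γ * γ - 1) := fun γ hγ ↦
    div_eq_klFun_div_sub_one hγ
      (klFun_eq_of_log_eq (zero_lt_one.trans (hx γ hγ)) (hP_eq γ hγ))
  by_contra! hle
  have hxlt : 1 + P γ₁ * γ₁ < 1 + P γ₂ * γ₂ :=
    add_lt_add_right (mul_lt_mul' hle h12 hγ₁.le (hP_pos γ₂ hγ₂)) 1
  have hdiv : φ / P γ₁ < φ / P γ₂ := by
    rw [hslope γ₁ hγ₁, hslope γ₂ hγ₂]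
    exact strictMonoOn_klFun_div_sub_one (hx γ₁ hγ₁) (hx γ₂ hγ₂) hxlt
  exact hle.not_gt ((div_lt_div_iff_of_pos_left hφ (hP_pos γ₁ hγ₁) (hP_pos γ₂ hγ₂)).mp hdiv)

theorem lambert_power_decreasing_in_gain
    (φ : ℝ) (hφ : 0 < φ) (P : ℝ → ℝ)
    (hP_pos : ∀ γ : ℝ, 0 < γ → 0 < P γ)
    (hP_eq : ∀ γ : ℝ, 0 < γ →
      Real.log (1 + P γ * γ) = 1 + (φ * γ - 1) / (1 + P γ * γ))
    (hP_unique : ∀ γ : ℝ, 0 < γ → ∀ Q : ℝ, 0 < Q →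
      Real.log (1 + Q * γ) = 1 + (φ * γ - 1) / (1 + Q * γ) → Q = P γ) :
    ∀ γ₁ γ₂ : ℝ, 0 < γ₁ → γ₁ < γ₂ → P γ₂ < P γ₁ :=
  lambert_power_decreasing_in_gain_general φ hφ P hP_pos hP_eq
end

section
/- Fix φ̃ > 0. For γ > 0 let P(γ) denote the unique P > 0 satisfying log(1+P·γ) = 1 + (φ̃·γ − 1)/(1+P·γ). Then the achieved rate log(1+P(γ)·γ) is strictly increasing in γ: if 0 < γ₁ < γ₂ then log(1+P(γ₁)·γ₁) < log(1+P(γ₂)·γ₂). Consequently, for any L > 0 the transmission duration L/log(1+P(γ)·γ) is strictly decreasing in γ. -/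
/-!
Write `x = 1 + P(γ)γ > 1`. Clearing the denominator in the defining equation gives
`x log x - x = φγ - 1`, and `x ↦ x log x - x` has derivative `log x > 0` on `(1, ∞)`.
So `x`, and with it the rate `log x`, grows strictly with the right-hand side `φγ - 1`,
i.e. with `γ`.
-/

open Real Set

theorem Real.mul_log_sub_self_strictMonoOn : StrictMonoOn (fun x ↦ x * log x - x) (Ici 1) := by
  refine strictMonoOn_of_deriv_pos (convex_Ici 1)
    (continuous_mul_log.continuousOn.sub continuousOn_id) fun x hx ↦ ?_
  rw [interior_Ici, mem_Ioi] at hx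
  have hderiv : HasDerivAt (fun x ↦ x * log x - x) (log x) x := by
    have h := (hasDerivAt_mul_log (by positivity)).sub (hasDerivAt_id x)
    rwa [add_sub_cancel_right] at h
  rw [hderiv.deriv]
  exact log_pos hx

theorem Real.mul_log_sub_self_eq_of_log_eq {x c : ℝ} (hx : 0 < x) (h : log x = 1 + c / x) :
    x * log x - x = c := by
  rw [h]
  field_simp
  ring

theorem lambert_rate_increasing_in_gain_general
    (φ : ℝ) (hφ : 0 < φ) (P : ℝ → ℝ)
    (hP_pos : ∀ γ : ℝ, 0 < γ → 0 < P γ)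
    (hP_eq : ∀ γ : ℝ, 0 < γ →
      Real.log (1 + P γ * γ) = 1 + (φ * γ - 1) / (1 + P γ * γ)) :
    (∀ γ₁ γ₂ : ℝ, 0 < γ₁ → γ₁ < γ₂ →
        Real.log (1 + P γ₁ * γ₁) < Real.log (1 + P γ₂ * γ₂)) ∧
      ∀ L : ℝ, 0 < L → ∀ γ₁ γ₂ : ℝ, 0 < γ₁ → γ₁ < γ₂ →
        L / Real.log (1 + P γ₂ * γ₂) < L / Real.log (1 + P γ₁ * γ₁) := by
  have one_lt : ∀ γ, 0 < γ → 1 < 1 + P γ * γ := fun γ hγ ↦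
    lt_add_of_pos_right 1 (mul_pos (hP_pos γ hγ) hγ)
  have rate_lt : ∀ γ₁ γ₂ : ℝ, 0 < γ₁ → γ₁ < γ₂ →
      log (1 + P γ₁ * γ₁) < log (1 + P γ₂ * γ₂) := by
    intro γ₁ γ₂ hγ₁ hγ₁₂
    have hγ₂ : 0 < γ₂ := hγ₁.trans hγ₁₂
    have hx₁ := one_lt γ₁ hγ₁
    have hx₂ := one_lt γ₂ hγ₂
    have hx_lt : 1 + P γ₁ * γ₁ < 1 + P γ₂ * γ₂ := by
      rw [← mul_log_sub_self_strictMonoOn.lt_iff_lt hx₁.le hx₂.le,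
        mul_log_sub_self_eq_of_log_eq (by linarith) (hP_eq γ₁ hγ₁),
        mul_log_sub_self_eq_of_log_eq (by linarith) (hP_eq γ₂ hγ₂)]
      gcongr
    exact log_lt_log (by linarith) hx_lt
  refine ⟨rate_lt, fun L hL γ₁ γ₂ hγ₁ hγ₁₂ ↦ ?_⟩
  exact div_lt_div_of_pos_left hL (log_pos (one_lt γ₁ hγ₁)) (rate_lt γ₁ γ₂ hγ₁ hγ₁₂)

theorem lambert_rate_increasing_in_gain
    (φ : ℝ) (hφ : 0 < φ) (P : ℝ → ℝ)
    (hP_pos : ∀ γ : ℝ, 0 < γ → 0 < P γ)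
    (hP_eq : ∀ γ : ℝ, 0 < γ →
      Real.log (1 + P γ * γ) = 1 + (φ * γ - 1) / (1 + P γ * γ))
    (hP_unique : ∀ γ : ℝ, 0 < γ → ∀ Q : ℝ, 0 < Q →
      Real.log (1 + Q * γ) = 1 + (φ * γ - 1) / (1 + Q * γ) → Q = P γ) :
    (∀ γ₁ γ₂ : ℝ, 0 < γ₁ → γ₁ < γ₂ →
        Real.log (1 + P γ₁ * γ₁) < Real.log (1 + P γ₂ * γ₂)) ∧
      ∀ L : ℝ, 0 < L → ∀ γ₁ γ₂ : ℝ, 0 < γ₁ → γ₁ < γ₂ →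
        L / Real.log (1 + P γ₂ * γ₂) < L / Real.log (1 + P γ₁ * γ₁) :=
  lambert_rate_increasing_in_gain_general φ hφ P hP_pos hP_eq
end

section
/- Let γ > 0 and φ̃ > 0, and let y* be the unique y ≥ −1 with y·e^y = (φ̃·γ − 1)/e. Then y* > −1, the number P* = (e^{1+y*} − 1)/γ is strictly positive, and P* satisfies log(1+P*·γ) = 1 + (φ̃·γ − 1)/(1+P*·γ); moreover P* is the unique positive solution of this equation. -/
/-! The substitution `1 + P γ = exp (1 + y)` turns the first-order condition
`log (1 + P γ) = 1 + (φ γ - 1) / (1 + P γ)` into the Lambert equation `y e^y = (φ γ - 1) / e`,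
and `P > 0` into `y > -1`. Since `φ γ > 0`, the right-hand side exceeds `-1/e = (-1) e^(-1)`,
which rules out `y* = -1`. -/

open Real

lemma neg_one_lt_of_neg_exp_neg_one_lt_mul_exp {y : ℝ} (hy : -1 ≤ y)
    (h : -exp (-1) < y * exp y) : -1 < y := by
  refine hy.lt_of_ne ?_
  rintro rfl
  simp at h

lemma log_exp_one_add_eq_one_add_div_iff (y c : ℝ) :
    log (exp (1 + y)) = 1 + c / exp (1 + y) ↔ y * exp y = c / exp 1 := by
  rw [log_exp, add_right_inj, exp_add, eq_div_iff (by positivity), eq_div_iff (by positivity)]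
  constructor <;> intro h <;> linarith

theorem lambert_closed_form
    (γ φ ystar : ℝ) (hγ : 0 < γ) (hφ : 0 < φ)
    (hystar : -1 ≤ ystar ∧ ystar * Real.exp ystar = (φ * γ - 1) / Real.exp 1)
    (hunique : ∀ y : ℝ, -1 ≤ y → y * Real.exp y = (φ * γ - 1) / Real.exp 1 →
      y = ystar) :
    -1 < ystar ∧
      0 < (Real.exp (1 + ystar) - 1) / γ ∧
      (Real.log (1 + (Real.exp (1 + ystar) - 1) / γ * γ) =
        1 + (φ * γ - 1) / (1 + (Real.exp (1 + ystar) - 1) / γ * γ)) ∧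
      ∀ P : ℝ, 0 < P →
        Real.log (1 + P * γ) = 1 + (φ * γ - 1) / (1 + P * γ) →
        P = (Real.exp (1 + ystar) - 1) / γ := by
  obtain ⟨hge, heq⟩ := hystar
  have hrhs : -exp (-1) < (φ * γ - 1) / exp 1 := by
    rw [exp_neg, ← one_div, ← neg_div]
    exact div_lt_div_of_pos_right (by linarith [mul_pos hφ hγ]) (exp_pos 1)
  have hy : -1 < ystar := neg_one_lt_of_neg_exp_neg_one_lt_mul_exp hge (heq ▸ hrhs)
  have hcancel : 1 + (exp (1 + ystar) - 1) / γ * γ = exp (1 + ystar) := by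
    rw [div_mul_cancel₀ _ hγ.ne', add_sub_cancel]
  refine ⟨hy, div_pos (sub_pos.2 (one_lt_exp_iff.2 (by linarith))) hγ, ?_, ?_⟩
  · rwa [hcancel, log_exp_one_add_eq_one_add_div_iff]
  · intro P hP hPeq
    have hx : 1 ≤ 1 + P * γ := le_add_of_nonneg_right (mul_pos hP hγ).le
    set y := log (1 + P * γ) - 1
    have hxy : 1 + P * γ = exp (1 + y) := by
      rw [add_sub_cancel, exp_log (by linarith)]
    have hy_ge : -1 ≤ y := by linarith [log_nonneg hx]
    rw [hxy, log_exp_one_add_eq_one_add_div_iff] at hPeq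
    rw [← hunique y hy_ge hPeq, ← hxy, add_sub_cancel_left, mul_div_cancel_right₀ _ hγ.ne']
end
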